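/- arXiv:math/0402452 — 7 statements merged into one kernel-verified Lean document; each statement's English description precedes it below -/
import Mathlib

section
/- Suppose g : ℤ → K (K a field) satisfies the three-term Gale–Robinson recurrence g(n) * g(n-k) = r * g(n-a) * g(n-k+a) + s * g(n-b) * g(n-k+b) for all n, where k, a, b are positive integers with a, b < k. Define f(n,i,j) = g((k*n + (2a-k)*i + (2b-k)*j)/2) whenever k*n + (2a-k)*i + (2b-k)*j is even. Then f satisfies the octahedron recurrence f(n,i,j) * f(n-2,i,j) = r * f(n-1,i-1,j) * f(n-1,i+1,j) + s * f(n-1,i,j-1) * f(n-1,i,j+1). -/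
theorem gale_robinson_to_octahedron {K : Type*} [Field K]
    (k a b : ℤ) (ha : 0 < a) (hb : 0 < b) (hak : a < k) (hbk : b < k)
    (r s : K) (g : ℤ → K) (hg : ∀ n, g n ≠ 0)
    (hrec : ∀ n : ℤ, g n * g (n - k) =
      r * g (n - a) * g (n - k + a) + s * g (n - b) * g (n - k + b))
    (f : ℤ → ℤ → ℤ → K)
    (hf : ∀ n i j : ℤ, f n i j = g ((k * n + (2 * a - k) * i + (2 * b - k) * j) / 2)) :
    ∀ n i j : ℤ, 2 ∣ (k * n + (2 * a - k) * i + (2 * b - k) * j) →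
      f n i j * f (n - 2) i j =
        r * f (n - 1) (i - 1) j * f (n - 1) (i + 1) j
          + s * f (n - 1) i (j - 1) * f (n - 1) i (j + 1) := by
  rintro n i j ⟨m, hm⟩
  have e0 : k * n + (2 * a - k) * i + (2 * b - k) * j = 2 * m := hm
  have e1 : k * (n - 2) + (2 * a - k) * i + (2 * b - k) * j = 2 * (m - k) := by
    linear_combination hm
  have e2 : k * (n - 1) + (2 * a - k) * (i - 1) + (2 * b - k) * j = 2 * (m - a) := by
    linear_combination hm
  have e3 : k * (n - 1) + (2 * a - k) * (i + 1) + (2 * b - k) * j = 2 * (m - k + a) := by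
    linear_combination hm
  have e4 : k * (n - 1) + (2 * a - k) * i + (2 * b - k) * (j - 1) = 2 * (m - b) := by
    linear_combination hm
  have e5 : k * (n - 1) + (2 * a - k) * i + (2 * b - k) * (j + 1) = 2 * (m - k + b) := by
    linear_combination hm
  rw [hf, hf, hf, hf, hf, hf, e0, e1, e2, e3, e4, e5,
    Int.mul_ediv_cancel_left _ two_ne_zero, Int.mul_ediv_cancel_left _ two_ne_zero,
    Int.mul_ediv_cancel_left _ two_ne_zero, Int.mul_ediv_cancel_left _ two_ne_zero,
    Int.mul_ediv_cancel_left _ two_ne_zero, Int.mul_ediv_cancel_left _ two_ne_zero]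
  exact hrec m
end

section
/- Define f : ℕ → ℤ × ℤ → ℝ by f(2n, i, j) = 5^(n^2); f(2n+1, i, j) = 5^(n^2+n) if i ≡ n (mod 2); and f(2n+1, i, j) = 2 * 5^(n^2+n) if i ≢ n (mod 2) (equivalently j ≡ n (mod 2), when n+1+i+j is even). Then f satisfies f(n,i,j) * f(n-2,i,j) = f(n-1,i-1,j) * f(n-1,i+1,j) + f(n-1,i,j-1) * f(n-1,i,j+1) for all n ≥ 2 and all (i,j) with n+i+j even. -/
lemma pow5_even (k : ℕ) :
    (5:ℝ) ^ ((k+1) ^ 2) * 5 ^ (k ^ 2) =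
      2 * 5 ^ (k ^ 2 + k) * (2 * 5 ^ (k ^ 2 + k)) + 5 ^ (k ^ 2 + k) * (5 ^ (k ^ 2 + k)) := by
  have h : (k+1) ^ 2 + k ^ 2 = (k ^ 2 + k) + (k ^ 2 + k) + 1 := by ring
  rw [← pow_add, h, pow_add, pow_add]
  ring

lemma pow5_odd (k : ℕ) :
    (5:ℝ) ^ ((k+1) ^ 2 + (k+1)) * (2 * 5 ^ (k ^ 2 + k)) =
      (5:ℝ) ^ ((k+1) ^ 2) * 5 ^ ((k+1) ^ 2) + 5 ^ ((k+1) ^ 2) * 5 ^ ((k+1) ^ 2) := by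
  have h : (k ^ 2 + k) + ((k+1) ^ 2 + (k+1)) = (k+1) ^ 2 + (k+1) ^ 2 := by ring
  rw [mul_comm, mul_assoc, ← pow_add, h, pow_add]
  ring

theorem fortress_octahedron (f : ℕ → ℤ → ℤ → ℝ)
    (h0 : ∀ (n : ℕ) (i j : ℤ), f (2 * n) i j = 5 ^ (n ^ 2))
    (h1 : ∀ (n : ℕ) (i j : ℤ), i % 2 = (n : ℤ) % 2 → f (2 * n + 1) i j = 5 ^ (n ^ 2 + n))
    (h2 : ∀ (n : ℕ) (i j : ℤ), i % 2 ≠ (n : ℤ) % 2 → f (2 * n + 1) i j = 2 * 5 ^ (n ^ 2 + n)) :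
    ∀ (n : ℕ) (i j : ℤ), 2 ≤ n → ((n : ℤ) + i + j) % 2 = 0 →
      f n i j * f (n - 2) i j =
        f (n - 1) (i - 1) j * f (n - 1) (i + 1) j
          + f (n - 1) i (j - 1) * f (n - 1) i (j + 1) := by
  intro n i j hn hpar
  rcases Nat.even_or_odd n with ⟨m, hm⟩ | ⟨m, hm⟩
  · -- n = 2m, m ≥ 1
    obtain ⟨k, rfl⟩ : ∃ k, m = k + 1 := ⟨m - 1, by omega⟩
    have e1 : n - 2 = 2 * k := by omega
    have e2 : n - 1 = 2 * k + 1 := by omega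
    have hm' : n = 2 * (k + 1) := by omega
    rw [e1, e2, hm', h0 (k+1), h0 k]
    by_cases hik : i % 2 = (k : ℤ) % 2
    · rw [h2 k (i-1) j (by omega), h2 k (i+1) j (by omega),
        h1 k i (j-1) hik, h1 k i (j+1) hik]
      exact pow5_even k
    · rw [h1 k (i-1) j (by omega), h1 k (i+1) j (by omega),
        h2 k i (j-1) hik, h2 k i (j+1) hik]
      rw [pow5_even k]; ring
  · -- n = 2m + 1, m ≥ 1
    obtain ⟨k, rfl⟩ : ∃ k, m = k + 1 := ⟨m - 1, by omega⟩
    have e1 : n - 2 = 2 * k + 1 := by omega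
    have e2 : n - 1 = 2 * (k + 1) := by omega
    have hm' : n = 2 * (k + 1) + 1 := by omega
    rw [e1, e2, hm', h0 (k+1), h0 (k+1), h0 (k+1), h0 (k+1)]
    by_cases hik : i % 2 = ((k : ℤ) + 1) % 2
    · rw [h1 (k+1) i j (by push_cast; omega), h2 k i j (by omega)]
      exact pow5_odd k
    · rw [h2 (k+1) i j (by push_cast; omega), h1 k i j (by omega)]
      rw [← pow5_odd k]; ring
end

section
/- Define f : ℕ → ℤ × ℤ → ℝ by f(2n,i,j) = 2^(2n^2); f(2n+1,i,j) = 2^(2n^2+2n) if i+j ≡ 2n+1 (mod 4); f(2n+1,i,j) = 2^(2n^2+2n+1) if i+j ≡ 2n-1 (mod 4). Then f satisfies the octahedron recurrence f(n,i,j)*f(n-2,i,j) = f(n-1,i-1,j)*f(n-1,i+1,j) + f(n-1,i,j-1)*f(n-1,i,j+1) for all n ≥ 2 and (i,j) with n+i+j even. -/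
theorem douglass_octahedron (f : ℕ → ℤ → ℤ → ℝ)
    (h0 : ∀ (n : ℕ) (i j : ℤ), f (2 * n) i j = 2 ^ (2 * n ^ 2))
    (h1 : ∀ (n : ℕ) (i j : ℤ), (i + j) % 4 = (2 * (n : ℤ) + 1) % 4 →
      f (2 * n + 1) i j = 2 ^ (2 * n ^ 2 + 2 * n))
    (h2 : ∀ (n : ℕ) (i j : ℤ), (i + j) % 4 = (2 * (n : ℤ) - 1) % 4 →
      f (2 * n + 1) i j = 2 ^ (2 * n ^ 2 + 2 * n + 1)) :
    ∀ (n : ℕ) (i j : ℤ), 2 ≤ n → ((n : ℤ) + i + j) % 2 = 0 →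
      f n i j * f (n - 2) i j =
        f (n - 1) (i - 1) j * f (n - 1) (i + 1) j
          + f (n - 1) i (j - 1) * f (n - 1) i (j + 1) := by
  intro n i j hn hpar
  rcases Nat.even_or_odd n with ⟨m, hm⟩ | ⟨m, hm⟩
  · -- n even: n = 2*(k+1)
    obtain ⟨k, rfl⟩ : ∃ k, m = k + 1 := ⟨m - 1, by omega⟩
    have hn2 : n = 2 * (k + 1) := by omega
    subst hn2
    have e2 : 2 * (k + 1) - 2 = 2 * k := by omega
    have e1 : 2 * (k + 1) - 1 = 2 * k + 1 := by omega
    rw [e1, e2, h0, h0]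
    have hij : (i + j) % 2 = 0 := by
      have : ((2 * (k + 1) : ℕ) : ℤ) = 2 * ((k : ℤ) + 1) := by push_cast; ring
      omega
    by_cases hc : (i - 1 + j) % 4 = (2 * (k : ℤ) + 1) % 4
    · rw [h1 k (i - 1) j hc, h2 k (i + 1) j (by omega),
        h1 k i (j - 1) (by omega), h2 k i (j + 1) (by omega)]
      rw [← pow_add, ← pow_add, ← two_mul, ← pow_succ']
      congr 1; ring
    · have hc2 : (i - 1 + j) % 4 = (2 * (k : ℤ) - 1) % 4 := by omega
      rw [h2 k (i - 1) j hc2, h1 k (i + 1) j (by omega),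
        h2 k i (j - 1) (by omega), h1 k i (j + 1) (by omega)]
      rw [← pow_add, ← pow_add, ← two_mul, ← pow_succ']
      congr 1; ring
  · -- n odd: n = 2*(k+1)+1
    obtain ⟨k, rfl⟩ : ∃ k, m = k + 1 := ⟨m - 1, by omega⟩
    have hn2 : n = 2 * (k + 1) + 1 := by omega
    subst hn2
    have e2 : 2 * (k + 1) + 1 - 2 = 2 * k + 1 := by omega
    have e1 : 2 * (k + 1) + 1 - 1 = 2 * (k + 1) := by omega
    rw [e1, e2, h0, h0, h0, h0]
    have hij : (i + j) % 2 = 1 := by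
      have : ((2 * (k + 1) + 1 : ℕ) : ℤ) = 2 * ((k : ℤ) + 1) + 1 := by push_cast; ring
      omega
    by_cases hc : (i + j) % 4 = (2 * ((k : ℤ) + 1) + 1) % 4
    · rw [h1 (k + 1) i j (by push_cast; omega), h2 k i j (by omega)]
      rw [← pow_add, ← pow_add, ← two_mul, ← pow_succ']
      congr 1; ring
    · have hc2 : (i + j) % 4 = (2 * ((k : ℤ) + 1) - 1) % 4 := by omega
      rw [h2 (k + 1) i j (by push_cast; omega), h1 k i j (by omega)]
      rw [← pow_add, ← pow_add, ← two_mul, ← pow_succ']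
      congr 1; ring
end

section
/- Let h : ℤ × ℤ → ℤ be a pseudo-height function (|h changes by exactly 1 between lattice-adjacent points) and fix (n₀, i₀, j₀) with n₀ ≡ i₀ + j₀ (mod 2). Define p(i,j) = n₀ - |i-i₀| - |j-j₀|. If h(i,j) < p(i,j), and (i',j') satisfies i' between i₀ and i (inclusive) and j' between j₀ and j (inclusive), then h(i',j') < p(i',j'). -/
/-!
Since `h` changes by one between adjacent points, `|h(i,j) - h(i',j')| ≤ |i - i'| + |j - j'|`.
When `(i',j')` lies in the box spanned by `(i₀,j₀)` and `(i,j)`, the distances to the centre split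
as `|i - i₀| = |i - i'| + |i' - i₀|` (likewise for `j`), so `p` grows by exactly `|i - i'| + |j - j'|`
from `(i,j)` to `(i',j')`, which is at least what `h` can grow.
-/

open Set Interval

section LinearOrderedAddCommGroup

variable {α : Type*} [AddCommGroup α] [LinearOrder α] [IsOrderedAddMonoid α]

theorem abs_sub_eq_abs_sub_add_abs_sub_of_mem_uIcc {a b c : α} (h : c ∈ [[a, b]]) :
    |b - a| = |b - c| + |c - a| := by
  rcases mem_uIcc.1 h with ⟨hac, hcb⟩ | ⟨hbc, hca⟩
  · rw [abs_of_nonneg (sub_nonneg.2 (hac.trans hcb)), abs_of_nonneg (sub_nonneg.2 hcb),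
      abs_of_nonneg (sub_nonneg.2 hac)]
    abel
  · rw [abs_of_nonpos (sub_nonpos.2 (hbc.trans hca)), abs_of_nonpos (sub_nonpos.2 hbc),
      abs_of_nonpos (sub_nonpos.2 hca)]
    abel

theorem abs_sub_le_zsmul_of_abs_succ_sub_le {f : ℤ → α} {K : α}
    (hf : ∀ n, |f (n + 1) - f n| ≤ K) (a b : ℤ) : |f a - f b| ≤ |a - b| • K := by
  have ordered : ∀ b a, b ≤ a → |f a - f b| ≤ (a - b) • K := by
    intro b a hba
    induction a, hba using Int.leInduction with
    | base => simp
    | succ n _ ih =>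
      calc |f (n + 1) - f b| ≤ |f (n + 1) - f n| + |f n - f b| := abs_sub_le _ _ _
        _ ≤ K + (n - b) • K := add_le_add (hf n) ih
        _ = (n + 1 - b) • K := by rw [add_sub_right_comm, add_zsmul, one_zsmul, add_comm]
  rcases le_total b a with hba | hab
  · rw [abs_of_nonneg (sub_nonneg.2 hba)]
    exact ordered b a hba
  · rw [abs_sub_comm, abs_sub_comm a, abs_of_nonneg (sub_nonneg.2 hab)]
    exact ordered a b hab

theorem abs_sub_le_taxicab_zsmul {h : ℤ → ℤ → α} {K : α}
    (hrow : ∀ i j, |h (i + 1) j - h i j| ≤ K) (hcol : ∀ i j, |h i (j + 1) - h i j| ≤ K)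
    (i j i' j' : ℤ) : |h i j - h i' j'| ≤ (|i - i'| + |j - j'|) • K :=
  calc |h i j - h i' j'| ≤ |h i j - h i' j| + |h i' j - h i' j'| := abs_sub_le _ _ _
    _ ≤ |i - i'| • K + |j - j'| • K :=
      add_le_add (abs_sub_le_zsmul_of_abs_succ_sub_le (f := (h · j)) (fun n => hrow n j) i i')
        (abs_sub_le_zsmul_of_abs_succ_sub_le (hcol i') j j')
    _ = (|i - i'| + |j - j'|) • K := (add_zsmul _ _ _).symm

end LinearOrderedAddCommGroup

theorem closed_faces_staircase_convex_general (h : ℤ → ℤ → ℤ)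
    (hadj : ∀ i₁ j₁ i₂ j₂ : ℤ, |i₁ - i₂| + |j₁ - j₂| = 1 → |h i₁ j₁ - h i₂ j₂| = 1)
    (n₀ i₀ j₀ : ℤ)
    (i j i' j' : ℤ)
    (hclosed : h i j < n₀ - |i - i₀| - |j - j₀|)
    (hi'1 : min i₀ i ≤ i') (hi'2 : i' ≤ max i₀ i)
    (hj'1 : min j₀ j ≤ j') (hj'2 : j' ≤ max j₀ j) :
    h i' j' < n₀ - |i' - i₀| - |j' - j₀| := by
  have hlip : |h i j - h i' j'| ≤ |i - i'| + |j - j'| := by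
    simpa using abs_sub_le_taxicab_zsmul (K := 1)
      (fun a b => (hadj (a + 1) b a b (by simp)).le) (fun a b => (hadj a (b + 1) a b (by simp)).le)
      i j i' j'
  have hi := abs_sub_eq_abs_sub_add_abs_sub_of_mem_uIcc (show i' ∈ [[i₀, i]] from ⟨hi'1, hi'2⟩)
  have hj := abs_sub_eq_abs_sub_add_abs_sub_of_mem_uIcc (show j' ∈ [[j₀, j]] from ⟨hj'1, hj'2⟩)
  linarith [(abs_le.1 hlip).1]

theorem closed_faces_staircase_convex (h : ℤ → ℤ → ℤ)
    (hadj : ∀ i₁ j₁ i₂ j₂ : ℤ, |i₁ - i₂| + |j₁ - j₂| = 1 → |h i₁ j₁ - h i₂ j₂| = 1)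
    (hpar : ∀ i j : ℤ, h i j % 2 = (i + j) % 2)
    (n₀ i₀ j₀ : ℤ) (hpar0 : (n₀ + i₀ + j₀) % 2 = 0)
    (i j i' j' : ℤ)
    (hclosed : h i j < n₀ - |i - i₀| - |j - j₀|)
    (hi'1 : min i₀ i ≤ i') (hi'2 : i' ≤ max i₀ i)
    (hj'1 : min j₀ j ≤ j') (hj'2 : j' ≤ max j₀ j) :
    h i' j' < n₀ - |i' - i₀| - |j' - j₀| :=
  closed_faces_staircase_convex_general h hadj n₀ i₀ j₀ i j i' j' hclosed hi'1 hi'2 hj'1 hj'2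
end

section
/- Fix integers k > a, b ≥ 1. Define h : ℤ × ℤ → ℤ on pairs (i,j) with appropriate parity as the unique value making (h(i,j), i, j) satisfy -k < (k·h(i,j) + (2a-k)·i + (2b-k)·j)/2 ≤ 0. Then whenever h is a well-defined integer-valued function with h(i,j) ≡ i+j (mod 2), it satisfies |h(i₁,j₁) - h(i₂,j₂)| ≤ 2 for lattice-adjacent points, and h is bounded below by a function of the form -(C + ε(|i|+|j|)) only when |2a-k| < k and |2b-k| < k, in which case h(i,j) + |i| + |j| → ∞ as |i|+|j| → ∞. -/
theorem gale_robinson_height_function (k a b : ℤ) (ha : 1 ≤ a) (hb : 1 ≤ b)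
    (hak : a < k) (hbk : b < k)
    (h : ℤ → ℤ → ℤ)
    (hpar : ∀ i j : ℤ, h i j % 2 = (i + j) % 2)
    (hdef : ∀ i j : ℤ,
      -(2 * k) < k * h i j + (2 * a - k) * i + (2 * b - k) * j ∧
      k * h i j + (2 * a - k) * i + (2 * b - k) * j ≤ 0) :
    (∀ i₁ j₁ i₂ j₂ : ℤ, |i₁ - i₂| + |j₁ - j₂| = 1 → |h i₁ j₁ - h i₂ j₂| ≤ 2) ∧
    (|2 * a - k| < k ∧ |2 * b - k| < k) ∧
    (∀ M : ℤ, ∃ N : ℤ, ∀ i j : ℤ, N ≤ |i| + |j| → M ≤ h i j + |i| + |j|) := by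
  have hk : 0 < k := by linarith
  have hc : |2 * a - k| ≤ k - 2 := by rw [abs_le]; omega
  have hd : |2 * b - k| ≤ k - 2 := by rw [abs_le]; omega
  refine ⟨?_, ⟨by rw [abs_lt]; omega, by rw [abs_lt]; omega⟩, ?_⟩
  · intro i₁ j₁ i₂ j₂ hadj
    obtain ⟨H1a, H1b⟩ := hdef i₁ j₁
    obtain ⟨H2a, H2b⟩ := hdef i₂ j₂
    have key : |(2 * a - k) * (i₁ - i₂) + (2 * b - k) * (j₁ - j₂)| ≤ k - 2 := by
      calc |(2 * a - k) * (i₁ - i₂) + (2 * b - k) * (j₁ - j₂)|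
          ≤ |(2 * a - k) * (i₁ - i₂)| + |(2 * b - k) * (j₁ - j₂)| := abs_add_le _ _
        _ = |2 * a - k| * |i₁ - i₂| + |2 * b - k| * |j₁ - j₂| := by rw [abs_mul, abs_mul]
        _ ≤ (k - 2) * |i₁ - i₂| + (k - 2) * |j₁ - j₂| :=
            add_le_add (mul_le_mul_of_nonneg_right hc (abs_nonneg _))
              (mul_le_mul_of_nonneg_right hd (abs_nonneg _))
        _ = (k - 2) * (|i₁ - i₂| + |j₁ - j₂|) := by ring
        _ = k - 2 := by rw [hadj, mul_one]
    rw [abs_le] at key ⊢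
    constructor
    · have hlo : k * (-3) < k * (h i₁ j₁ - h i₂ j₂) := by nlinarith [key.1, key.2]
      have := lt_of_mul_lt_mul_left hlo hk.le
      linarith
    · have hhi : k * (h i₁ j₁ - h i₂ j₂) < k * 3 := by nlinarith [key.1, key.2]
      have := lt_of_mul_lt_mul_left hhi hk.le
      linarith
  · intro M
    refine ⟨k * (|M| + 2), fun i j hij => ?_⟩
    obtain ⟨H1, H2⟩ := hdef i j
    have f1 : (2 * a - k) * i ≤ (k - 2) * |i| :=
      (le_abs_self _).trans (by rw [abs_mul]; exact mul_le_mul_of_nonneg_right hc (abs_nonneg i))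
    have f2 : (2 * b - k) * j ≤ (k - 2) * |j| :=
      (le_abs_self _).trans (by rw [abs_mul]; exact mul_le_mul_of_nonneg_right hd (abs_nonneg j))
    refine le_of_mul_le_mul_left ?_ hk
    nlinarith [mul_le_mul_of_nonneg_left (le_abs_self M) hk.le,
      mul_nonneg hk.le (abs_nonneg M), abs_nonneg i, abs_nonneg j]
end

section
/- Let f be defined by the octahedron recurrence f(n,i,j)·f(n-2,i,j) = a(i+n-1,j)·c(i-n+1,j)·f(n-1,i,j+1)·f(n-1,i,j-1) + b(i,j+n-1)·d(i,j-n+1)·f(n-1,i+1,j)·f(n-1,i-1,j) with initial data f(h(i,j),i,j) = x(i,j) on the surface ℐ of a height function h. Fix (i₀,j₀) with i₀+j₀ odd and a formal variable t. Define f̃(n,i,j) = t·f(n,i,j) if n+i+j < i₀+j₀+1 and n+i-j < i₀-j₀+1, and f̃(n,i,j) = f(n,i,j) otherwise; define ã(i₀,j₀) = t·a(i₀,j₀) and ã = a elsewhere. Then f̃ satisfies the same recurrence with a replaced by ã (and b, c, d, and the remaining structure unchanged). -/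
theorem twisted_octahedron_recurrence {K : Type*} [Field K] (t : K)
    (a b c d : ℤ → ℤ → K) (x : ℤ → ℤ → K) (h : ℤ → ℤ → ℤ)
    (f : ℤ → ℤ → ℤ → K)
    (hinit : ∀ i j : ℤ, f (h i j) i j = x i j)
    (hrec : ∀ n i j : ℤ, (n + i + j) % 2 = 0 → h i j < n →
      f n i j * f (n - 2) i j =
        a (i + n - 1) j * c (i - n + 1) j * f (n - 1) i (j + 1) * f (n - 1) i (j - 1)
          + b i (j + n - 1) * d i (j - n + 1) * f (n - 1) (i + 1) j * f (n - 1) (i - 1) j)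
    (i₀ j₀ : ℤ) (hodd : (i₀ + j₀) % 2 = 1)
    (ft : ℤ → ℤ → ℤ → K)
    (hft : ∀ n i j : ℤ, ft n i j =
      if n + i + j < i₀ + j₀ + 1 ∧ n + i - j < i₀ - j₀ + 1 then t * f n i j else f n i j)
    (at' : ℤ → ℤ → K)
    (hat : ∀ i j : ℤ, at' i j = if i = i₀ ∧ j = j₀ then t * a i j else a i j) :
    ∀ n i j : ℤ, (n + i + j) % 2 = 0 → h i j < n →
      ft n i j * ft (n - 2) i j =
        at' (i + n - 1) j * c (i - n + 1) j * ft (n - 1) i (j + 1) * ft (n - 1) i (j - 1)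
          + b i (j + n - 1) * d i (j - n + 1) * ft (n - 1) (i + 1) j * ft (n - 1) (i - 1) j := by
  intro n i j hpar hn
  simp only [hft, hat]
  split_ifs <;>
    first
      | exfalso; omega
      | linear_combination hrec n i j hpar hn
      | linear_combination t * hrec n i j hpar hn
      | linear_combination t^2 * hrec n i j hpar hn
end

section
/- Let the sequence g : ℕ → ℚ be defined by g(0)=g(1)=g(2)=g(3)=1 and the Somos-4 recurrence g(n)·g(n-4) = g(n-1)·g(n-3) + g(n-2)² for n ≥ 4. Then g(n) is a positive integer for all n (in particular g is well-defined, i.e., g(n-4) ≠ 0 at every step). -/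
theorem somos4_integrality (g : ℕ → ℚ)
    (h0 : g 0 = 1) (h1 : g 1 = 1) (h2 : g 2 = 1) (h3 : g 3 = 1)
    (hrec : ∀ n : ℕ, 4 ≤ n →
      g n * g (n - 4) = g (n - 1) * g (n - 3) + g (n - 2) ^ 2) :
    ∀ n : ℕ, ∃ m : ℕ, 0 < m ∧ g n = (m : ℚ) := by
  set A : ℕ → ℤ := fun k => (g k).num with hA
  have main : ∀ n : ℕ, (0 < A n ∧ g n = (A n : ℚ)) ∧
      ∀ k, k < n → n ≤ k + 3 → IsCoprime (A k) (A n) := by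
    intro n
    induction n using Nat.strong_induction_on with
    | _ n ih =>
    rcases lt_or_ge n 4 with h4 | h4
    · have hg : g n = 1 := by interval_cases n <;> assumption
      have hAn : A n = 1 := by simp [hA, hg]
      exact ⟨⟨by simp [hAn], by simp [hAn, hg]⟩,
        fun k _ _ => by rw [hAn]; exact isCoprime_one_right⟩
    · obtain ⟨m, rfl⟩ : ∃ m, n = m + 4 := ⟨n - 4, by omega⟩
      obtain ⟨⟨hp0, b0⟩, hc0⟩ := ih m (by omega)
      obtain ⟨⟨hp1, b1⟩, hc1⟩ := ih (m+1) (by omega)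
      obtain ⟨⟨hp2, b2⟩, hc2⟩ := ih (m+2) (by omega)
      obtain ⟨⟨hp3, b3⟩, hc3⟩ := ih (m+3) (by omega)
      have hr := hrec (m+4) (by omega)
      have i1 : m+4-4 = m := by omega
      have i2 : m+4-1 = m+3 := by omega
      have i3 : m+4-3 = m+1 := by omega
      have i4 : m+4-2 = m+2 := by omega
      rw [i1, i2, i3, i4, b0, b1, b2, b3] at hr
      -- the key divisibility
      have hdvd : A m ∣ A (m+3) * A (m+1) + A (m+2) ^ 2 := by
        rcases lt_or_ge m 4 with hm | hm
        · have hgm : g m = 1 := by interval_cases m <;> assumption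
          have : A m = 1 := by simp [hA, hgm]
          rw [this]; exact one_dvd _
        · obtain ⟨l, rfl⟩ : ∃ l, m = l + 4 := ⟨m - 4, by omega⟩
          have c0 := (ih l (by omega)).1
          have c1 := (ih (l+1) (by omega)).1
          have c2 := (ih (l+2) (by omega)).1
          have c3 := (ih (l+3) (by omega)).1
          -- integer forms of the recurrence at l+4, l+5, l+6, l+7
          have mkeq : ∀ j : ℕ, 4 ≤ j → j + 3 < l + 4 + 4 →
              (∀ i, g i = (A i : ℚ)) → True := fun _ _ _ _ => trivial
          have e0 : A (l+4) * A l = A (l+3) * A (l+1) + A (l+2) ^ 2 := by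
            have h := hrec (l+4) (by omega)
            have j1 : l+4-4 = l := by omega
            have j2 : l+4-1 = l+3 := by omega
            have j3 : l+4-3 = l+1 := by omega
            have j4 : l+4-2 = l+2 := by omega
            rw [j1, j2, j3, j4, c0.2, c1.2, c2.2, c3.2, b0] at h
            exact_mod_cast h
          have e1 : A (l+5) * A (l+1) = A (l+4) * A (l+2) + A (l+3) ^ 2 := by
            have h := hrec (l+5) (by omega)
            have j1 : l+5-4 = l+1 := by omega
            have j2 : l+5-1 = l+4 := by omega
            have j3 : l+5-3 = l+2 := by omega
            have j4 : l+5-2 = l+3 := by omega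
            have b1' : g (l+5) = (A (l+5) : ℚ) := b1
            rw [j1, j2, j3, j4, c1.2, c2.2, c3.2, b0, b1'] at h
            exact_mod_cast h
          have e2 : A (l+6) * A (l+2) = A (l+5) * A (l+3) + A (l+4) ^ 2 := by
            have h := hrec (l+6) (by omega)
            have j1 : l+6-4 = l+2 := by omega
            have j2 : l+6-1 = l+5 := by omega
            have j3 : l+6-3 = l+3 := by omega
            have j4 : l+6-2 = l+4 := by omega
            have b1' : g (l+5) = (A (l+5) : ℚ) := b1
            have b2' : g (l+6) = (A (l+6) : ℚ) := b2
            rw [j1, j2, j3, j4, c2.2, c3.2, b0, b1', b2'] at h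
            exact_mod_cast h
          have e3 : A (l+7) * A (l+3) = A (l+6) * A (l+4) + A (l+5) ^ 2 := by
            have h := hrec (l+7) (by omega)
            have j1 : l+7-4 = l+3 := by omega
            have j2 : l+7-1 = l+6 := by omega
            have j3 : l+7-3 = l+4 := by omega
            have j4 : l+7-2 = l+5 := by omega
            have b1' : g (l+5) = (A (l+5) : ℚ) := b1
            have b2' : g (l+6) = (A (l+6) : ℚ) := b2
            have b3' : g (l+7) = (A (l+7) : ℚ) := b3
            rw [j1, j2, j3, j4, c3.2, b0, b1', b2', b3'] at h
            exact_mod_cast h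
          -- coprimality of A (l+4) with the previous three terms
          have k1 : IsCoprime (A (l+4)) (A (l+1)) := (hc0 (l+1) (by omega) (by omega)).symm
          have k2 : IsCoprime (A (l+4)) (A (l+2)) := (hc0 (l+2) (by omega) (by omega)).symm
          have k3 : IsCoprime (A (l+4)) (A (l+3)) := (hc0 (l+3) (by omega) (by omega)).symm
          have hcop : IsCoprime (A (l+4)) (A (l+1) ^ 2 * (A (l+2) ^ 2 * A (l+3) ^ 2)) :=
            (k1.pow_right).mul_right ((k2.pow_right).mul_right (k3.pow_right))
          have goalidx : A (l+4+3) * A (l+4+1) + A (l+4+2) ^ 2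
              = A (l+7) * A (l+5) + A (l+6) ^ 2 := by
            have e1' : l+4+3 = l+7 := by omega
            have e2' : l+4+1 = l+5 := by omega
            have e3' : l+4+2 = l+6 := by omega
            rw [e1', e2', e3']
          rw [goalidx]
          refine hcop.dvd_of_dvd_mul_right ?_
          refine ⟨(2) * A (l+5) * A (l+2) * A l * A (l+3) ^ 3 * A (l+4) + A (l+5) * A l ^ 2 * A (l+3) * A (l+4) ^ 3 + A (l+5) * A l * A (l+3) ^ 5 + (-1) * A (l+2) * A l * A (l+3) ^ 2 * A (l+4) ^ 3 + (3) * A (l+2) * A (l+3) ^ 3 * A (l+1) * A (l+4) ^ 2 + (-1) * A l * A (l+3) ^ 4 * A (l+4) ^ 2 + A l * A (l+3) * A (l+1) * A (l+4) ^ 4 + (2) * A (l+3) ^ 5 * A (l+1) * A (l+4), ?_⟩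
          linear_combination
            (A (l+5) * A (l+2) ^ 2 * A (l+3) * A (l+1) ^ 2) * e3 +
            (A (l+6) * A (l+2) * A (l+3) ^ 2 * A (l+1) ^ 2 + A (l+5) * A (l+2) * A (l+3) * A (l+1) ^ 2 * A (l+4) + A (l+5) * A (l+3) ^ 3 * A (l+1) ^ 2 + A (l+3) ^ 2 * A (l+1) ^ 2 * A (l+4) ^ 2) * e2 +
            (A (l+5) ^ 2 * A (l+2) ^ 2 * A (l+3) * A (l+1) + A (l+5) * A (l+2) ^ 3 * A (l+3) * A (l+4) + A (l+5) * A (l+2) ^ 2 * A (l+3) ^ 3 + A (l+5) * A (l+2) * A (l+3) ^ 2 * A (l+1) * A (l+4) + A (l+5) * A (l+3) ^ 4 * A (l+1) + A (l+2) * A (l+3) * A (l+1) * A (l+4) ^ 3 + (-1) * A l * A (l+3) ^ 2 * A (l+4) ^ 3 + (2) * A (l+3) ^ 3 * A (l+1) * A (l+4) ^ 2) * e1 +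
            ((-1) * A (l+5) * A (l+2) ^ 2 * A (l+3) * A (l+4) ^ 2 + (-2) * A (l+5) * A (l+2) * A (l+3) ^ 3 * A (l+4) + (-1) * A (l+5) * A l * A (l+3) * A (l+4) ^ 3 + (-1) * A (l+5) * A (l+3) ^ 5 + (-1) * A (l+3) * A (l+1) * A (l+4) ^ 4) * e0
      obtain ⟨y, hy⟩ := hdvd
      have hAm0 : (A m : ℚ) ≠ 0 := by
        exact_mod_cast hp0.ne'
      have h2 : g (m+4) * (A m : ℚ) = (A m : ℚ) * (y : ℚ) := by
        rw [hr]; exact_mod_cast hy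
      have hgn : g (m+4) = (y : ℚ) :=
        mul_right_cancel₀ hAm0 (by rw [h2]; ring)
      have hy0 : 0 < y := by
        have hX : 0 < A (m+3) * A (m+1) + A (m+2) ^ 2 := by
          nlinarith [mul_pos hp3 hp1, sq_nonneg (A (m+2))]
        rw [hy] at hX
        by_contra h
        push_neg at h
        nlinarith
      have hAn : A (m+4) = y := by simp [hA, hgn]
      have En : A (m+4) * A m = A (m+3) * A (m+1) + A (m+2) ^ 2 := by
        rw [hAn, hy]; ring
      refine ⟨⟨by rw [hAn]; exact hy0, by rw [hAn]; exact hgn⟩, ?_⟩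
      intro k hk1 hk2
      have hk : k = m+1 ∨ k = m+2 ∨ k = m+3 := by omega
      rcases hk with rfl | rfl | rfl
      · have c12 : IsCoprime (A (m+1)) (A (m+2)) := hc2 (m+1) (by omega) (by omega)
        have hco : IsCoprime (A (m+1)) (A (m+2) ^ 2 + A (m+1) * A (m+3)) :=
          (c12.pow_right).add_mul_left_right _
        have h' : A (m+2) ^ 2 + A (m+1) * A (m+3) = A (m+4) * A m := by
          linear_combination -En
        rw [h'] at hco
        exact hco.of_mul_right_left
      · have c23 : IsCoprime (A (m+2)) (A (m+3)) := hc3 (m+2) (by omega) (by omega)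
        have c21 : IsCoprime (A (m+2)) (A (m+1)) := (hc2 (m+1) (by omega) (by omega)).symm
        have hco : IsCoprime (A (m+2)) (A (m+3) * A (m+1) + A (m+2) * A (m+2)) :=
          (c23.mul_right c21).add_mul_left_right _
        have h' : A (m+3) * A (m+1) + A (m+2) * A (m+2) = A (m+4) * A m := by
          linear_combination -En
        rw [h'] at hco
        exact hco.of_mul_right_left
      · have c32 : IsCoprime (A (m+3)) (A (m+2)) := (hc3 (m+2) (by omega) (by omega)).symm
        have hco : IsCoprime (A (m+3)) (A (m+2) ^ 2 + A (m+3) * A (m+1)) :=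
          (c32.pow_right).add_mul_left_right _
        have h' : A (m+2) ^ 2 + A (m+3) * A (m+1) = A (m+4) * A m := by
          linear_combination -En
        rw [h'] at hco
        exact hco.of_mul_right_left
  intro n
  obtain ⟨⟨hp, hg'⟩, -⟩ := main n
  refine ⟨(A n).toNat, by omega, ?_⟩
  rw [hg']
  exact_mod_cast (Int.toNat_of_nonneg hp.le).symm
end
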